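/- Let L be a language with a unary connective ¬ and binary connectives ∨ and ∧, F the set of all wffs of L, and ⟨F, 𝒱, ⊨⟩ a semantic structure satisfying (A3) and (A1). Let |~ be a relation on P(F) × F. Then |~ is a coherency preserving, definability preserving pivotal-discriminative consequence relation if and only if |~ satisfies conditions (|~0), (|~6), (|~7), (|~8), (|~9), and (|~10). -/

import Mathlib

/-- The set of models of a set of formulas `Γ`. -/
def modSet {F V : Type*} (sat : V → F → Prop) (Γ : Set F) : Set V :=
  {v | ∀ α ∈ Γ, sat v α}

/-- The set of formulas satisfied in every valuation of `S`. -/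
def thSet {F V : Type*} (sat : V → F → Prop) (S : Set V) : Set F :=
  {α | S ⊆ modSet sat {α}}

/-- `D`: the family of definable sets of valuations. -/
def defFam {F V : Type*} (sat : V → F → Prop) : Set (Set V) :=
  {S | ∃ Γ : Set F, modSet sat Γ = S}

/-- The basic consequence operator `C_⊢(Γ) = Th(Mod(Γ))`. -/
def cnsq {F V : Type*} (sat : V → F → Prop) (Γ : Set F) : Set F :=
  thSet sat (modSet sat Γ)

/-- `C_|~(Γ) = {α | Γ |~ α}`. -/
def relC {F : Type*} (rel : Set F → F → Prop) (Γ : Set F) : Set F :=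
  {α | rel Γ α}

/-- `𝐂`: the sets of valuations that do not satisfy both a formula and its negation. -/
def coFam {F V : Type*} (sat : V → F → Prop) (neg : F → F) : Set (Set V) :=
  {S | ∀ α, ¬(S ⊆ modSet sat {α} ∧ S ⊆ modSet sat {neg α})}

/-- `Γ` is consistent: for no `α` do we have both `Γ ⊢ α` and `Γ ⊢ ¬α`. -/
def isConsistent {F V : Type*} (sat : V → F → Prop) (neg : F → F) (Γ : Set F) : Prop :=
  ∀ α, ¬(modSet sat Γ ⊆ modSet sat {α} ∧ modSet sat Γ ⊆ modSet sat {neg α})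

/-- One step of the inductive construction of the sets `H_i(Γ)`:
`hStep … Γ B = {¬β : β ∈ C_⊢(B) \ C_|~(Γ) and ¬β ∉ C_⊢(B)}`. -/
def hStep {F V : Type*} (sat : V → F → Prop) (neg : F → F)
    (rel : Set F → F → Prop) (Γ B : Set F) : Set F :=
  {x | ∃ β, x = neg β ∧ β ∈ cnsq sat B ∧ β ∉ relC rel Γ ∧ neg β ∉ cnsq sat B}

/-- `hPrev … Γ n = Γ ∪ C_|~(Γ) ∪ H_1(Γ) ∪ … ∪ H_n(Γ)`. -/
def hPrev {F V : Type*} (sat : V → F → Prop) (neg : F → F)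
    (rel : Set F → F → Prop) (Γ : Set F) : ℕ → Set F
  | 0 => Γ ∪ relC rel Γ
  | n + 1 => hPrev sat neg rel Γ n ∪ hStep sat neg rel Γ (hPrev sat neg rel Γ n)

/-- `H(Γ) = ⋃_{i ≥ 1} H_i(Γ)`, where `H_{n+1}(Γ) = hStep … Γ (hPrev … Γ n)`. -/
def hSet {F V : Type*} (sat : V → F → Prop) (neg : F → F)
    (rel : Set F → F → Prop) (Γ : Set F) : Set F :=
  ⋃ n : ℕ, hStep sat neg rel Γ (hPrev sat neg rel Γ n)

/-- Assumption `(A2)`. -/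
def assumpA2 {F V : Type*} (sat : V → F → Prop) (neg : F → F) : Prop :=
  ∀ (Γ : Set F) (α : F), α ∉ cnsq sat Γ → neg α ∉ cnsq sat Γ →
    ¬(modSet sat Γ ∩ modSet sat {α} ⊆ modSet sat {neg α})

/-- Assumption `(A3)`. -/
def assumpA3 {F V : Type*} (sat : V → F → Prop) (neg : F → F)
    (disj conj : F → F → F) : Prop :=
  ∀ α β : F,
    modSet sat {disj α β} = modSet sat {α} ∪ modSet sat {β} ∧
    modSet sat {conj α β} = modSet sat {α} ∩ modSet sat {β} ∧
    modSet sat {neg (neg α)} = modSet sat {α} ∧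
    modSet sat {neg (disj α β)} = modSet sat {conj (neg α) (neg β)} ∧
    modSet sat {neg (conj α β)} = modSet sat {disj (neg α) (neg β)}

/-- Condition `(|~0)`. -/
def cond0 {F V : Type*} (sat : V → F → Prop) (rel : Set F → F → Prop) : Prop :=
  ∀ Γ Δ : Set F, cnsq sat Γ = cnsq sat Δ → relC rel Γ = relC rel Δ

/-- Condition `(|~6)`. -/
def cond6 {F V : Type*} (sat : V → F → Prop) (neg : F → F)
    (rel : Set F → F → Prop) : Prop :=
  ∀ (Γ : Set F) (α β : F),
    β ∈ cnsq sat (Γ ∪ relC rel Γ) → β ∉ relC rel Γ →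
    neg α ∈ cnsq sat (Γ ∪ relC rel Γ ∪ {neg β}) → α ∉ relC rel Γ

/-- Condition `(|~7)`. -/
def cond7 {F V : Type*} (sat : V → F → Prop) (neg : F → F) (disj : F → F → F)
    (rel : Set F → F → Prop) : Prop :=
  ∀ (Γ : Set F) (α β : F),
    α ∈ cnsq sat (Γ ∪ relC rel Γ) → α ∉ relC rel Γ →
    β ∈ cnsq sat (Γ ∪ relC rel Γ ∪ {neg α}) → β ∉ relC rel Γ →
    disj α β ∉ relC rel Γ

/-- Condition `(|~8)`. -/
def cond8 {F V : Type*} (sat : V → F → Prop) (neg : F → F)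
    (rel : Set F → F → Prop) : Prop :=
  ∀ (Γ : Set F) (α : F), α ∈ relC rel Γ → neg α ∉ cnsq sat (Γ ∪ relC rel Γ)

/-- Condition `(|~9)`. -/
def cond9 {F V : Type*} (sat : V → F → Prop) (neg : F → F)
    (rel : Set F → F → Prop) : Prop :=
  ∀ Γ Δ : Set F, relC rel Γ ∪ hSet sat neg rel Γ ⊆
    cnsq sat (Δ ∪ relC rel Δ ∪ hSet sat neg rel Δ ∪ Γ)

/-- Condition `(|~10)`. -/
def cond10 {F V : Type*} (sat : V → F → Prop) (neg : F → F)
    (rel : Set F → F → Prop) : Prop :=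
  ∀ Γ : Set F, isConsistent sat neg Γ →
    isConsistent sat neg (relC rel Γ) ∧ Γ ⊆ relC rel Γ ∧
      cnsq sat (relC rel Γ) = relC rel Γ

/-- Condition `(|~11)`. -/
def cond11 {F V : Type*} (sat : V → F → Prop) (neg : F → F)
    (rel : Set F → F → Prop) : Prop :=
  ∀ Γ : Set F, cnsq sat (Γ ∪ relC rel Γ ∪ hSet sat neg rel Γ) =
    thSet sat {v ∈ modSet sat Γ | ∀ Δ : Set F, v ∈ modSet sat Δ →
      v ∈ modSet sat (relC rel Δ ∪ hSet sat neg rel Δ)}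

/-- Condition `(|~12)`. -/
def cond12 {F V : Type*} (sat : V → F → Prop) (neg : F → F)
    (rel : Set F → F → Prop) : Prop :=
  Set.univ \ {v : V | ∀ Δ : Set F, v ∈ modSet sat Δ →
    v ∈ modSet sat (relC rel Δ ∪ hSet sat neg rel Δ)} ∈ defFam sat

/-!
Write `Y(Γ) = hMod … Γ` for `Mod(Γ ∪ C_|~(Γ) ∪ H(Γ))` and call `β` pivotal for `Γ` if
`β ∈ C_⊢(Γ ∪ C_|~(Γ)) \ C_|~(Γ)`. For a coherency and definability preserving choice function
`μ` representing `|~` one shows `μ(Mod Γ) = Y(Γ)`; the conditions are then read off from the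
representation, `(|~9)` from strong coherence. Conversely, put `μ(Mod Γ) := Y(Γ)`. As `𝒱` is
finite, the sets `Mod(Γ ∪ C_|~(Γ) ∪ H_1(Γ) ∪ … ∪ H_i(Γ))` stabilise and each `H_i(Γ)` may be
replaced by a finite subset; by `(|~7)` the formulas whose negations are added merge one at a
time into a single pivotal disjunction, so `Y(Γ)` is `Mod(Γ ∪ C_|~(Γ))` or
`Mod(Γ ∪ C_|~(Γ) ∪ {¬β})` with `β` pivotal. Then `(|~8)`, resp. `(|~6)`, shows that no
`|~`-consequence of `Γ` has its negation true on `Y(Γ)`.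
-/

section ModSet

variable {F V : Type*} (sat : V → F → Prop)

lemma mem_modSet_singleton {α : F} {v : V} : v ∈ modSet sat {α} ↔ sat v α := by
  simp [modSet]

variable {sat}

lemma modSet_anti {Γ Δ : Set F} (h : Γ ⊆ Δ) : modSet sat Δ ⊆ modSet sat Γ :=
  fun _ hv α hα => hv α (h hα)

lemma modSet_subset_of_mem {Γ : Set F} {α : F} (hα : α ∈ Γ) :
    modSet sat Γ ⊆ modSet sat {α} :=
  modSet_anti (Set.singleton_subset_iff.2 hα)

lemma subset_modSet_iff {S : Set V} {Γ : Set F} :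
    S ⊆ modSet sat Γ ↔ ∀ α ∈ Γ, S ⊆ modSet sat {α} :=
  ⟨fun h _ hα => h.trans (modSet_subset_of_mem hα),
    fun h _ hv α hα => (mem_modSet_singleton sat).1 (h α hα hv)⟩

variable (sat)

lemma modSet_union (Γ Δ : Set F) : modSet sat (Γ ∪ Δ) = modSet sat Γ ∩ modSet sat Δ := by
  ext v
  simp only [modSet, Set.mem_ofPred_eq, Set.mem_union, Set.mem_inter_iff, or_imp, forall_and]

lemma modSet_iUnion {ι : Sort*} (Γ : ι → Set F) :
    modSet sat (⋃ i, Γ i) = ⋂ i, modSet sat (Γ i) := by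
  ext v
  simp only [modSet, Set.mem_ofPred_eq, Set.mem_iUnion, Set.mem_iInter, forall_exists_index]
  exact forall_comm

lemma modSet_empty : modSet sat (∅ : Set F) = Set.univ := by
  ext
  simp [modSet]

lemma modSet_cnsq (Γ : Set F) : modSet sat (cnsq sat Γ) = modSet sat Γ :=
  (modSet_anti fun _ hα => modSet_subset_of_mem hα).antisymm
    (subset_modSet_iff.2 fun _ hα => hα)

lemma modSet_mem_coFam_iff (neg : F → F) (Γ : Set F) :
    modSet sat Γ ∈ coFam sat neg ↔ isConsistent sat neg Γ :=
  Iff.rfl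

/-- Over finitely many valuations, one witness formula per non-model suffices. -/
lemma exists_finset_modSet_eq [Finite V] (Γ : Set F) :
    ∃ t : Finset F, ↑t ⊆ Γ ∧ modSet sat ↑t = modSet sat Γ := by
  have hwit : ∀ v : {v // v ∉ modSet sat Γ}, ∃ α ∈ Γ, ¬ sat v.1 α := by
    rintro ⟨v, hv⟩
    simpa [modSet] using hv
  choose f hfΓ hfv using hwit
  have hrange : ∀ {α}, α ∈ (Set.finite_range f).toFinset ↔ α ∈ Set.range f := by simp
  refine ⟨(Set.finite_range f).toFinset, fun α hα => ?_, ?_⟩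
  · obtain ⟨v, rfl⟩ := hrange.1 hα
    exact hfΓ v
  · refine subset_antisymm (fun v hv => by_contra fun hvΓ => ?_) (modSet_anti fun α hα => ?_)
    · exact hfv ⟨v, hvΓ⟩ (hv _ (hrange.2 ⟨_, rfl⟩))
    · obtain ⟨v, rfl⟩ := hrange.1 hα
      exact hfΓ v

end ModSet

section AssumpA3

variable {F V : Type*} {sat : V → F → Prop} {neg : F → F} {disj conj : F → F → F}

lemma modSet_disj (hA3 : assumpA3 sat neg disj conj) (α β : F) :
    modSet sat {disj α β} = modSet sat {α} ∪ modSet sat {β} :=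
  (hA3 α β).1

lemma modSet_neg_neg (hA3 : assumpA3 sat neg disj conj) (α : F) :
    modSet sat {neg (neg α)} = modSet sat {α} :=
  (hA3 α α).2.2.1

lemma modSet_neg_disj (hA3 : assumpA3 sat neg disj conj) (α β : F) :
    modSet sat {neg (disj α β)} = modSet sat {neg α} ∩ modSet sat {neg β} :=
  (hA3 α β).2.2.2.1.trans (hA3 (neg α) (neg β)).2.1

end AssumpA3

section HSet

variable {F V : Type*} (sat : V → F → Prop) (neg : F → F) (rel : Set F → F → Prop)

def hMod (Γ : Set F) : Set V :=
  modSet sat (Γ ∪ relC rel Γ ∪ hSet sat neg rel Γ)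

variable {sat neg rel} {Γ : Set F}

lemma hPrev_mono : Monotone (hPrev sat neg rel Γ) :=
  monotone_nat_of_le_succ fun _ => Set.subset_union_left

lemma iUnion_hPrev : ⋃ n, hPrev sat neg rel Γ n = Γ ∪ relC rel Γ ∪ hSet sat neg rel Γ := by
  refine subset_antisymm (Set.iUnion_subset fun n => ?_)
    (Set.union_subset (Set.subset_iUnion (hPrev sat neg rel Γ) 0) (Set.iUnion_subset fun n => ?_))
  · induction n with
    | zero => exact Set.subset_union_left
    | succ n ih =>
      exact Set.union_subset ih
        ((Set.subset_iUnion (fun n => hStep sat neg rel Γ (hPrev sat neg rel Γ n)) n).trans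
          Set.subset_union_right)
  · exact Set.subset_union_right.trans (Set.subset_iUnion (hPrev sat neg rel Γ) (n + 1))

lemma hMod_eq_iInter : hMod sat neg rel Γ = ⋂ n, modSet sat (hPrev sat neg rel Γ n) := by
  rw [hMod, ← iUnion_hPrev, modSet_iUnion]

lemma hMod_subset_modSet_hPrev (n : ℕ) :
    hMod sat neg rel Γ ⊆ modSet sat (hPrev sat neg rel Γ n) :=
  hMod_eq_iInter.trans_subset (Set.iInter_subset _ n)

lemma hMod_subset_modSet : hMod sat neg rel Γ ⊆ modSet sat Γ :=
  (hMod_subset_modSet_hPrev 0).trans (modSet_anti Set.subset_union_left)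

lemma hMod_subset_modSet_relC : hMod sat neg rel Γ ⊆ modSet sat (relC rel Γ) :=
  (hMod_subset_modSet_hPrev 0).trans (modSet_anti Set.subset_union_right)

/-- Either `¬β` already follows at stage `n`, or it is added to `H_{n+1}(Γ)`. -/
lemma hMod_subset_modSet_neg {β : F} {n : ℕ} (hβ : β ∈ cnsq sat (hPrev sat neg rel Γ n))
    (hβC : β ∉ relC rel Γ) : hMod sat neg rel Γ ⊆ modSet sat {neg β} := by
  by_cases hnβ : neg β ∈ cnsq sat (hPrev sat neg rel Γ n)
  · exact (hMod_subset_modSet_hPrev n).trans hnβ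
  · exact modSet_subset_of_mem (Or.inr (Set.mem_iUnion.2 ⟨n, β, rfl, hβ, hβC, hnβ⟩))

lemma exists_hMod_eq_modSet_hPrev [Finite V] :
    ∃ n, hMod sat neg rel Γ = modSet sat (hPrev sat neg rel Γ n) := by
  obtain ⟨n, hn⟩ := WellFoundedLT.antitone_chain_condition
    (f := fun n => modSet sat (hPrev sat neg rel Γ n)) fun _ _ h => modSet_anti (hPrev_mono h)
  refine ⟨n, (hMod_subset_modSet_hPrev n).antisymm ?_⟩
  rw [hMod_eq_iInter]
  refine Set.subset_iInter fun m => ?_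
  rcases le_total n m with h | h
  · exact (hn m h).le
  · exact modSet_anti (hPrev_mono h)

lemma hMod_subset_modSet_neg_of_subset [Finite V] {β : F}
    (hβ : hMod sat neg rel Γ ⊆ modSet sat {β}) (hβC : β ∉ relC rel Γ) :
    hMod sat neg rel Γ ⊆ modSet sat {neg β} := by
  obtain ⟨n, hn⟩ : ∃ n, hMod sat neg rel Γ = _ := exists_hMod_eq_modSet_hPrev
  exact hMod_subset_modSet_neg (show modSet sat _ ⊆ _ from hn ▸ hβ) hβC

end HSet

def Discriminates {F V : Type*} (sat : V → F → Prop) (neg : F → F) (rel : Set F → F → Prop)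
    (Γ : Set F) (X : Set V) : Prop :=
  ∀ α, rel Γ α ↔ X ⊆ modSet sat {α} ∧ ¬ X ⊆ modSet sat {neg α}

namespace Discriminates

variable {F V : Type*} {sat : V → F → Prop} {neg : F → F} {disj conj : F → F → F}
  {rel : Set F → F → Prop} {Γ : Set F} {X : Set V}

lemma subset_modSet_neg (hX : Discriminates sat neg rel Γ X) {β : F}
    (hβ : X ⊆ modSet sat {β}) (hβC : ¬ rel Γ β) : X ⊆ modSet sat {neg β} :=
  by_contra fun hnβ => hβC ((hX β).2 ⟨hβ, hnβ⟩)

lemma rel_of_subset (hX : Discriminates sat neg rel Γ X) (hXco : X ∈ coFam sat neg) {α : F}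
    (hα : X ⊆ modSet sat {α}) : rel Γ α :=
  (hX α).2 ⟨hα, fun hnα => hXco α ⟨hα, hnα⟩⟩

lemma subset_modSet_relC (hX : Discriminates sat neg rel Γ X) :
    X ⊆ modSet sat (relC rel Γ) :=
  subset_modSet_iff.2 fun α hα => ((hX α).1 hα).1

lemma subset_modSet_union_relC (hX : Discriminates sat neg rel Γ X)
    (hXΓ : X ⊆ modSet sat Γ) : X ⊆ modSet sat (Γ ∪ relC rel Γ) :=
  (modSet_union sat _ _).symm ▸ Set.subset_inter hXΓ hX.subset_modSet_relC

lemma subset_modSet_neg_of_pivotal (hX : Discriminates sat neg rel Γ X)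
    (hXΓ : X ⊆ modSet sat Γ) {β : F} (hβ : β ∈ cnsq sat (Γ ∪ relC rel Γ))
    (hβC : β ∉ relC rel Γ) : X ⊆ modSet sat {neg β} :=
  hX.subset_modSet_neg ((hX.subset_modSet_union_relC hXΓ).trans hβ) hβC

lemma subset_hMod (hX : Discriminates sat neg rel Γ X) (hXΓ : X ⊆ modSet sat Γ) :
    X ⊆ hMod sat neg rel Γ := by
  rw [hMod_eq_iInter]
  refine Set.subset_iInter fun n => ?_
  induction n with
  | zero => exact hX.subset_modSet_union_relC hXΓ
  | succ n ih =>
    change X ⊆ modSet sat (hPrev sat neg rel Γ n ∪ hStep sat neg rel Γ (hPrev sat neg rel Γ n))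
    rw [modSet_union]
    refine Set.subset_inter ih (subset_modSet_iff.2 ?_)
    rintro _ ⟨β, rfl, hβ, hβC, -⟩
    exact hX.subset_modSet_neg (ih.trans hβ) hβC

/-- If `Mod Γ` is incoherent, witnessed by `α₀`, then for each defining formula `σ` of `X` the
formula `¬σ ∨ α₀` is pivotal, so its negation, which entails `σ`, holds on `Y(Γ)`. -/
lemma hMod_subset (hA3 : assumpA3 sat neg disj conj) (hX : Discriminates sat neg rel Γ X)
    (hXΓ : X ⊆ modSet sat Γ) (hXdef : X ∈ defFam sat)
    (hXco : modSet sat Γ ∈ coFam sat neg → X ∈ coFam sat neg) :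
    hMod sat neg rel Γ ⊆ X := by
  obtain ⟨Θ, rfl⟩ := hXdef
  refine subset_modSet_iff.2 fun σ hσ => ?_
  have hXσ := modSet_subset_of_mem (sat := sat) hσ
  by_cases hΓ : modSet sat Γ ∈ coFam sat neg
  · exact hMod_subset_modSet_relC.trans (modSet_subset_of_mem (hX.rel_of_subset (hXco hΓ) hXσ))
  obtain ⟨α₀, hα₀, hnα₀⟩ : ∃ α₀, modSet sat Γ ⊆ modSet sat {α₀} ∧
      modSet sat Γ ⊆ modSet sat {neg α₀} := by
    simpa [coFam] using hΓ
  have hpiv : disj (neg σ) α₀ ∈ cnsq sat (Γ ∪ relC rel Γ) := by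
    change modSet sat _ ⊆ _
    rw [modSet_disj hA3, modSet_union]
    exact Set.inter_subset_left.trans (hα₀.trans Set.subset_union_right)
  have hneg : modSet sat {neg (disj (neg σ) α₀)} = modSet sat {σ} ∩ modSet sat {neg α₀} := by
    rw [modSet_neg_disj hA3, modSet_neg_neg hA3]
  have hnpiv : disj (neg σ) α₀ ∉ relC rel Γ := fun h =>
    ((hX _).1 h).2 (hneg ▸ Set.subset_inter hXσ (hXΓ.trans hnα₀))
  calc hMod sat neg rel Γ ⊆ modSet sat {neg (disj (neg σ) α₀)} :=
        hMod_subset_modSet_neg (n := 0) hpiv hnpiv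
    _ ⊆ modSet sat {σ} := hneg ▸ Set.inter_subset_left

lemma hMod_eq (hA3 : assumpA3 sat neg disj conj) (hX : Discriminates sat neg rel Γ X)
    (hXΓ : X ⊆ modSet sat Γ) (hXdef : X ∈ defFam sat)
    (hXco : modSet sat Γ ∈ coFam sat neg → X ∈ coFam sat neg) : hMod sat neg rel Γ = X :=
  (hX.hMod_subset hA3 hXΓ hXdef hXco).antisymm (hX.subset_hMod hXΓ)

lemma modSet_relC_eq (hX : Discriminates sat neg rel Γ X) (hXdef : X ∈ defFam sat)
    (hXco : X ∈ coFam sat neg) : modSet sat (relC rel Γ) = X := by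
  obtain ⟨Θ, rfl⟩ := hXdef
  refine (subset_modSet_iff.2 fun σ hσ => ?_).antisymm hX.subset_modSet_relC
  exact modSet_subset_of_mem (hX.rel_of_subset hXco (modSet_subset_of_mem hσ))

end Discriminates

section Forward

variable {F V : Type*} {sat : V → F → Prop} {neg : F → F} {disj conj : F → F → F}
  {rel : Set F → F → Prop} {μ : Set V → Set V}

lemma cond0_of_discriminates (hrep : ∀ Γ, Discriminates sat neg rel Γ (μ (modSet sat Γ))) :
    cond0 sat rel := by
  intro Γ Δ h
  have hmod : modSet sat Γ = modSet sat Δ := by rw [← modSet_cnsq, h, modSet_cnsq]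
  ext α
  exact (hrep Γ α).trans (hmod ▸ (hrep Δ α).symm)

lemma cond6_of_discriminates (hμ : ∀ Γ, μ (modSet sat Γ) ⊆ modSet sat Γ)
    (hrep : ∀ Γ, Discriminates sat neg rel Γ (μ (modSet sat Γ))) : cond6 sat neg rel := by
  intro Γ α β hβ hβC hnα hα
  refine ((hrep Γ α).1 hα).2 (Set.Subset.trans ?_ hnα)
  rw [modSet_union]
  exact Set.subset_inter ((hrep Γ).subset_modSet_union_relC (hμ Γ))
    ((hrep Γ).subset_modSet_neg_of_pivotal (hμ Γ) hβ hβC)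

lemma cond7_of_discriminates (hA3 : assumpA3 sat neg disj conj)
    (hμ : ∀ Γ, μ (modSet sat Γ) ⊆ modSet sat Γ)
    (hrep : ∀ Γ, Discriminates sat neg rel Γ (μ (modSet sat Γ))) : cond7 sat neg disj rel := by
  intro Γ α β hα hαC hβ hβC hαβ
  have hnα := (hrep Γ).subset_modSet_neg_of_pivotal (hμ Γ) hα hαC
  have hXβ : μ (modSet sat Γ) ⊆ modSet sat {β} := by
    refine Set.Subset.trans ?_ hβ
    rw [modSet_union]
    exact Set.subset_inter ((hrep Γ).subset_modSet_union_relC (hμ Γ)) hnα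
  refine ((hrep Γ _).1 hαβ).2 ?_
  rw [modSet_neg_disj hA3]
  exact Set.subset_inter hnα ((hrep Γ).subset_modSet_neg hXβ hβC)

lemma cond8_of_discriminates (hμ : ∀ Γ, μ (modSet sat Γ) ⊆ modSet sat Γ)
    (hrep : ∀ Γ, Discriminates sat neg rel Γ (μ (modSet sat Γ))) : cond8 sat neg rel :=
  fun Γ α hα hnα =>
    ((hrep Γ α).1 hα).2 (((hrep Γ).subset_modSet_union_relC (hμ Γ)).trans hnα)

lemma cond9_of_discriminates (hA3 : assumpA3 sat neg disj conj)
    (hμ : ∀ Γ, μ (modSet sat Γ) ⊆ modSet sat Γ)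
    (hrep : ∀ Γ, Discriminates sat neg rel Γ (μ (modSet sat Γ)))
    (hSC : ∀ Γ Δ, μ (modSet sat Δ) ∩ modSet sat Γ ⊆ μ (modSet sat Γ))
    (hDP : ∀ Γ, μ (modSet sat Γ) ∈ defFam sat)
    (hCP : ∀ Γ, modSet sat Γ ∈ coFam sat neg → μ (modSet sat Γ) ∈ coFam sat neg) :
    cond9 sat neg rel := by
  have hY : ∀ Γ, hMod sat neg rel Γ = μ (modSet sat Γ) := fun Γ =>
    (hrep Γ).hMod_eq hA3 (hμ Γ) (hDP Γ) (hCP Γ)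
  intro Γ Δ φ hφ
  change modSet sat _ ⊆ _
  calc modSet sat (Δ ∪ relC rel Δ ∪ hSet sat neg rel Δ ∪ Γ)
      = μ (modSet sat Δ) ∩ modSet sat Γ := by rw [modSet_union, ← hMod, hY]
    _ ⊆ hMod sat neg rel Γ := (hY Γ).symm ▸ hSC Γ Δ
    _ ⊆ modSet sat {φ} := modSet_subset_of_mem (Set.union_assoc Γ _ _ ▸ Or.inr hφ)

lemma cond10_of_discriminates (hμ : ∀ Γ, μ (modSet sat Γ) ⊆ modSet sat Γ)
    (hrep : ∀ Γ, Discriminates sat neg rel Γ (μ (modSet sat Γ)))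
    (hDP : ∀ Γ, μ (modSet sat Γ) ∈ defFam sat)
    (hCP : ∀ Γ, modSet sat Γ ∈ coFam sat neg → μ (modSet sat Γ) ∈ coFam sat neg) :
    cond10 sat neg rel := by
  intro Γ hΓ
  have hXco := hCP Γ hΓ
  have hC := (hrep Γ).modSet_relC_eq (hDP Γ) hXco
  refine ⟨(modSet_mem_coFam_iff sat neg _).1 (hC ▸ hXco),
    fun α hα => (hrep Γ).rel_of_subset hXco ((hμ Γ).trans (modSet_subset_of_mem hα)), ?_⟩
  ext α
  change modSet sat _ ⊆ _ ↔ rel Γ α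
  rw [hC]
  exact ⟨(hrep Γ).rel_of_subset hXco, fun h => ((hrep Γ α).1 h).1⟩

end Forward

def IsPivotCut {F V : Type*} (sat : V → F → Prop) (neg : F → F) (rel : Set F → F → Prop)
    (Γ : Set F) (S : Set V) : Prop :=
  S = modSet sat (Γ ∪ relC rel Γ) ∨
    ∃ β ∈ cnsq sat (Γ ∪ relC rel Γ), β ∉ relC rel Γ ∧
      S = modSet sat (Γ ∪ relC rel Γ ∪ {neg β})

section Backward

variable {F V : Type*} {sat : V → F → Prop} {neg : F → F} {disj conj : F → F → F}
  {rel : Set F → F → Prop} {Γ : Set F}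

/-- By `(|~7)`, the disjunction of the current pivotal formula with `β` is again pivotal. -/
lemma IsPivotCut.inter_modSet_neg (hA3 : assumpA3 sat neg disj conj)
    (hc7 : cond7 sat neg disj rel) {S : Set V} (hS : IsPivotCut sat neg rel Γ S) {β : F}
    (hβ : S ⊆ modSet sat {β}) (hβC : β ∉ relC rel Γ) :
    IsPivotCut sat neg rel Γ (S ∩ modSet sat {neg β}) := by
  rcases hS with rfl | ⟨B, hB, hBC, rfl⟩
  · exact Or.inr ⟨β, hβ, hβC, (modSet_union sat _ _).symm⟩
  refine Or.inr ⟨disj B β, ?_, hc7 Γ B β hB hBC hβ hβC, ?_⟩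
  · change modSet sat _ ⊆ _
    rw [modSet_disj hA3]
    exact hB.trans Set.subset_union_left
  · rw [modSet_union sat (Γ ∪ relC rel Γ), modSet_union sat (Γ ∪ relC rel Γ),
      modSet_neg_disj hA3, Set.inter_assoc]

lemma IsPivotCut.inter_modSet_hStep [Finite V] (hA3 : assumpA3 sat neg disj conj)
    (hc7 : cond7 sat neg disj rel) {B : Set F} (hB : IsPivotCut sat neg rel Γ (modSet sat B)) :
    IsPivotCut sat neg rel Γ (modSet sat B ∩ modSet sat (hStep sat neg rel Γ B)) := by
  classical
  obtain ⟨t, htB, ht⟩ := exists_finset_modSet_eq sat (hStep sat neg rel Γ B)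
  rw [← ht]
  clear ht
  induction t using Finset.induction_on with
  | empty => rwa [Finset.coe_empty, modSet_empty, Set.inter_univ]
  | insert x t _ ih =>
    rw [Finset.coe_insert] at htB
    obtain ⟨β, rfl, hβ, hβC, -⟩ := htB (Set.mem_insert _ _)
    rw [Finset.coe_insert, Set.insert_eq, modSet_union, Set.inter_left_comm, Set.inter_comm]
    exact (ih ((Set.subset_insert _ _).trans htB)).inter_modSet_neg hA3 hc7
      (Set.inter_subset_left.trans hβ) hβC

lemma isPivotCut_hMod [Finite V] (hA3 : assumpA3 sat neg disj conj)
    (hc7 : cond7 sat neg disj rel) : IsPivotCut sat neg rel Γ (hMod sat neg rel Γ) := by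
  obtain ⟨n, hn⟩ : ∃ n, hMod sat neg rel Γ = _ := exists_hMod_eq_modSet_hPrev
  rw [hn]
  clear hn
  induction n with
  | zero => exact Or.inl rfl
  | succ n ih =>
    change IsPivotCut sat neg rel Γ
      (modSet sat (hPrev sat neg rel Γ n ∪ hStep sat neg rel Γ (hPrev sat neg rel Γ n)))
    rw [modSet_union]
    exact ih.inter_modSet_hStep hA3 hc7

lemma discriminates_hMod [Finite V] (hA3 : assumpA3 sat neg disj conj)
    (hc6 : cond6 sat neg rel) (hc7 : cond7 sat neg disj rel) (hc8 : cond8 sat neg rel) :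
    Discriminates sat neg rel Γ (hMod sat neg rel Γ) := by
  refine fun α => ⟨fun hα => ⟨hMod_subset_modSet_relC.trans (modSet_subset_of_mem hα),
    fun hnα => ?_⟩, fun ⟨hα, hnα⟩ => by_contra fun hαC =>
      hnα (hMod_subset_modSet_neg_of_subset hα hαC)⟩
  rcases isPivotCut_hMod hA3 hc7 (Γ := Γ) with h | ⟨β, hβ, hβC, h⟩ <;> rw [h] at hnα
  · exact hc8 Γ α hα hnα
  · exact hc6 Γ α β hβ hβC hnα hα

lemma hStep_congr {Δ B B' : Set F} (hC : relC rel Γ = relC rel Δ)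
    (hB : modSet sat B = modSet sat B') :
    hStep sat neg rel Γ B = hStep sat neg rel Δ B' := by
  simp only [hStep, cnsq, hC, hB]

lemma hMod_congr (hc0 : cond0 sat rel) {Δ : Set F} (h : modSet sat Γ = modSet sat Δ) :
    hMod sat neg rel Γ = hMod sat neg rel Δ := by
  have hC : relC rel Γ = relC rel Δ := hc0 Γ Δ (by rw [cnsq, cnsq, h])
  have hprev : ∀ n, modSet sat (hPrev sat neg rel Γ n) = modSet sat (hPrev sat neg rel Δ n) := by
    intro n
    induction n with
    | zero =>
      change modSet sat (Γ ∪ relC rel Γ) = modSet sat (Δ ∪ relC rel Δ)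
      rw [modSet_union, modSet_union, h, hC]
    | succ n ih =>
      change modSet sat (hPrev sat neg rel Γ n ∪ hStep sat neg rel Γ (hPrev sat neg rel Γ n)) =
        modSet sat (hPrev sat neg rel Δ n ∪ hStep sat neg rel Δ (hPrev sat neg rel Δ n))
      rw [modSet_union, modSet_union, ih, hStep_congr hC ih]
  simp only [hMod_eq_iInter, hprev]

lemma hSet_eq_empty (h : cnsq sat (Γ ∪ relC rel Γ) ⊆ relC rel Γ) :
    hSet sat neg rel Γ = ∅ := by
  have hstep : hStep sat neg rel Γ (hPrev sat neg rel Γ 0) = ∅ :=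
    Set.eq_empty_of_forall_notMem fun _ ⟨_, _, hβ, hβC, _⟩ => hβC (h hβ)
  have hprev : ∀ n, hPrev sat neg rel Γ n = hPrev sat neg rel Γ 0 := by
    intro n
    induction n with
    | zero => rfl
    | succ n ih =>
      change hPrev sat neg rel Γ n ∪ hStep sat neg rel Γ (hPrev sat neg rel Γ n) = _
      rw [ih, hstep, Set.union_empty]
  simp only [hSet, hprev, hstep, Set.iUnion_empty]

lemma hMod_eq_modSet_relC (hc10 : cond10 sat neg rel) (hΓ : isConsistent sat neg Γ) :
    hMod sat neg rel Γ = modSet sat (relC rel Γ) := by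
  obtain ⟨-, hΓC, hCn⟩ := hc10 Γ hΓ
  have hunion : Γ ∪ relC rel Γ = relC rel Γ := Set.union_eq_right.2 hΓC
  rw [hMod, hSet_eq_empty (by rw [hunion, hCn]), Set.union_empty, hunion]

lemma hMod_inter_modSet_subset (hc9 : cond9 sat neg rel) (Δ : Set F) :
    hMod sat neg rel Δ ∩ modSet sat Γ ⊆ hMod sat neg rel Γ := by
  rw [hMod, ← modSet_union, hMod, Set.union_assoc Γ, modSet_union sat Γ]
  exact Set.subset_inter (modSet_anti Set.subset_union_right)
    (subset_modSet_iff.2 fun φ hφ => hc9 Γ Δ hφ)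

theorem exists_choice_of_conds [Finite V] (hA3 : assumpA3 sat neg disj conj)
    (hc0 : cond0 sat rel) (hc6 : cond6 sat neg rel) (hc7 : cond7 sat neg disj rel)
    (hc8 : cond8 sat neg rel) (hc9 : cond9 sat neg rel) (hc10 : cond10 sat neg rel) :
    ∃ μ : Set V → Set V,
      (∀ A ∈ defFam sat, μ A ⊆ A) ∧
      (∀ A ∈ defFam sat, ∀ B ∈ defFam sat, μ B ∩ A ⊆ μ A) ∧
      (∀ A ∈ defFam sat, A ∈ coFam sat neg → μ A ∈ coFam sat neg) ∧
      (∀ A ∈ defFam sat, μ A ∈ defFam sat) ∧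
      ∀ Γ, Discriminates sat neg rel Γ (μ (modSet sat Γ)) := by
  have hμ : ∀ Γ, hMod sat neg rel (thSet sat (modSet sat Γ)) = hMod sat neg rel Γ :=
    fun Γ => hMod_congr hc0 (modSet_cnsq sat Γ)
  refine ⟨fun A => hMod sat neg rel (thSet sat A), ?_, ?_, ?_, ?_, ?_⟩ <;> dsimp only
  · rintro _ ⟨Γ, rfl⟩
    rw [hμ]
    exact hMod_subset_modSet
  · rintro _ ⟨Γ, rfl⟩ _ ⟨Δ, rfl⟩
    rw [hμ, hμ]
    exact hMod_inter_modSet_subset hc9 Δ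
  · rintro _ ⟨Γ, rfl⟩ hΓ
    rw [hμ, hMod_eq_modSet_relC hc10 hΓ]
    exact (hc10 Γ hΓ).1
  · rintro _ ⟨Γ, rfl⟩
    exact ⟨_, rfl⟩
  · intro Γ
    rw [hμ]
    exact discriminates_hMod hA3 hc6 hc7 hc8

end Backward

/-- Under `(A3)` and `(A1)`, `|~` is a coherency preserving,
definability preserving pivotal-discriminative consequence relation iff it satisfies
`(|~0)`, `(|~6)`, `(|~7)`, `(|~8)`, `(|~9)`, and `(|~10)`. -/
theorem stmt10 {F V : Type*} (neg : F → F) (disj conj : F → F → F)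
    (sat : V → F → Prop)
    (hA3 : assumpA3 sat neg disj conj) (hA1 : Finite V)
    (rel : Set F → F → Prop) :
    (∃ μ : Set V → Set V,
        (∀ A ∈ defFam sat, μ A ⊆ A) ∧
        (∀ A ∈ defFam sat, ∀ B ∈ defFam sat, μ B ∩ A ⊆ μ A) ∧
        (∀ A ∈ defFam sat, A ∈ coFam sat neg → μ A ∈ coFam sat neg) ∧
        (∀ A ∈ defFam sat, μ A ∈ defFam sat) ∧
        (∀ (Γ : Set F) (α : F), rel Γ α ↔
          (μ (modSet sat Γ) ⊆ modSet sat {α} ∧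
            ¬ μ (modSet sat Γ) ⊆ modSet sat {neg α}))) ↔
      (cond0 sat rel ∧ cond6 sat neg rel ∧ cond7 sat neg disj rel ∧
        cond8 sat neg rel ∧ cond9 sat neg rel ∧ cond10 sat neg rel) := by
  refine ⟨fun ⟨μ, hsub, hSC, hCP, hDP, hrep⟩ => ?_,
    fun ⟨hc0, hc6, hc7, hc8, hc9, hc10⟩ => exists_choice_of_conds hA3 hc0 hc6 hc7 hc8 hc9 hc10⟩
  have hdef : ∀ Γ, modSet sat Γ ∈ defFam sat := fun Γ => ⟨Γ, rfl⟩
  have hμ : ∀ Γ, μ (modSet sat Γ) ⊆ modSet sat Γ := fun Γ => hsub _ (hdef Γ)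
  have hDP' : ∀ Γ, μ (modSet sat Γ) ∈ defFam sat := fun Γ => hDP _ (hdef Γ)
  have hCP' : ∀ Γ, modSet sat Γ ∈ coFam sat neg → μ (modSet sat Γ) ∈ coFam sat neg :=
    fun Γ => hCP _ (hdef Γ)
  exact ⟨cond0_of_discriminates hrep, cond6_of_discriminates hμ hrep,
    cond7_of_discriminates hA3 hμ hrep, cond8_of_discriminates hμ hrep,
    cond9_of_discriminates hA3 hμ hrep (fun Γ Δ => hSC _ (hdef Γ) _ (hdef Δ)) hDP' hCP',
    cond10_of_discriminates hμ hrep hDP' hCP'⟩
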